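/- arXiv:2107.02853 — 2 statements merged into one kernel-verified Lean document; each statement's English description precedes it below -/
import Mathlib

section
/- For every eccentricity e with 0 ≤ e < 1, the average over one period of (1−e cos u)^{−7} satisfies (1/2π) ∫₀^{2π} (1 − e cos u)^{−7} du = (1 + (15/2)e² + (45/8)e⁴ + (5/16)e⁶) / (1−e²)^{13/2}. -/
/-!
The derivative of `e sin u / (1 - e cos u)^(n+1)`, rewritten with
`e² sin² u = e² - (e cos u)²`, is a combination of `(1 - e cos u)` to the powers
`-(n+2)`, `-(n+1)` and `-n`. Integrating over a period kills the boundary term, so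
`Iₙ = ∫₀^{2π} (1 - e cos u)⁻ⁿ du` satisfies `(n+1)(1-e²) I_{n+2} = (2n+1) I_{n+1} - n Iₙ`,
which reduces `I₇` to `I₁`. Finally `I₁ = 2π/√(1-e²)`, because `√(1-e²)/(1 - e cos u)` is the
derivative of the true anomaly with respect to the eccentric anomaly, and the true anomaly
advances by `2π` over one period.
-/

open Real intervalIntegral

noncomputable def invPowIntegral (e : ℝ) (n : ℕ) : ℝ :=
  ∫ u in (0:ℝ)..(2 * π), ((1 - e * cos u) ^ n)⁻¹

/-- The true anomaly as a function of the eccentric anomaly `u`; unlike the textbook formula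
`2 arctan (√((1 + e)/(1 - e)) tan (u/2))`, this form is smooth on all of `ℝ`. -/
noncomputable def trueAnomaly (e u : ℝ) : ℝ :=
  u + 2 * arctan (e / (1 + √(1 - e ^ 2)) * sin u / (1 - e / (1 + √(1 - e ^ 2)) * cos u))

section

variable {e : ℝ}

lemma one_sub_sq_pos (he : |e| < 1) : 0 < 1 - e ^ 2 :=
  sub_pos.mpr ((sq_lt_one_iff_abs_lt_one e).mpr he)

lemma one_sub_mul_cos_pos (he : |e| < 1) (u : ℝ) : 0 < 1 - e * cos u := by
  have : |e * cos u| < 1 := by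
    rw [abs_mul]
    exact mul_lt_one_of_nonneg_of_lt_one_left (abs_nonneg e) he (abs_cos_le_one u)
  linarith [le_abs_self (e * cos u)]

lemma continuous_inv_pow_one_sub_mul_cos (he : |e| < 1) (n : ℕ) :
    Continuous fun u => ((1 - e * cos u) ^ n)⁻¹ :=
  (by fun_prop : Continuous fun u => (1 - e * cos u) ^ n).inv₀
    fun u => pow_ne_zero n (one_sub_mul_cos_pos he u).ne'

lemma hasDerivAt_one_sub_mul_cos (e u : ℝ) :
    HasDerivAt (fun x => 1 - e * cos x) (e * sin u) u := by
  simpa using ((hasDerivAt_cos u).const_mul e).const_sub 1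

lemma hasDerivAt_mul_sin_mul_inv_pow (u : ℝ) (n : ℕ) (hu : 1 - e * cos u ≠ 0) :
    HasDerivAt (fun x => e * sin x * ((1 - e * cos x) ^ (n + 1))⁻¹)
      ((n + 1) * (1 - e ^ 2) * ((1 - e * cos u) ^ (n + 2))⁻¹
        - (2 * n + 1) * ((1 - e * cos u) ^ (n + 1))⁻¹ + n * ((1 - e * cos u) ^ n)⁻¹) u := by
  refine (((hasDerivAt_sin u).const_mul e).mul
    (((hasDerivAt_one_sub_mul_cos e u).pow (n + 1)).inv (pow_ne_zero _ hu))).congr_deriv ?_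
  have hsin : e ^ 2 * sin u ^ 2 = e ^ 2 - (e * cos u) ^ 2 := by
    linear_combination e ^ 2 * sin_sq_add_cos_sq u
  simp only [Pi.inv_apply, Pi.pow_apply]
  generalize e * cos u = c at hu hsin ⊢
  push_cast
  rw [pow_succ, pow_succ, pow_succ]
  field_simp
  linear_combination (-(n + 1) * (1 - c) ^ (n + 2)) * hsin

lemma invPowIntegral_add_two (he : |e| < 1) (n : ℕ) :
    invPowIntegral e (n + 2) =
      ((2 * n + 1) * invPowIntegral e (n + 1) - n * invPowIntegral e n) /
        ((n + 1) * (1 - e ^ 2)) := by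
  have hint (k : ℕ) (c : ℝ) : IntervalIntegrable (fun u => c * ((1 - e * cos u) ^ k)⁻¹)
      MeasureTheory.volume 0 (2 * π) :=
    ((continuous_inv_pow_one_sub_mul_cos he k).const_smul c).intervalIntegrable _ _
  have h := integral_eq_sub_of_hasDerivAt
    (fun u _ => hasDerivAt_mul_sin_mul_inv_pow u n (one_sub_mul_cos_pos he u).ne')
    (((hint _ _).sub (hint _ _)).add (hint _ _))
  rw [integral_add ((hint _ _).sub (hint _ _)) (hint _ _),
    integral_sub (hint _ _) (hint _ _)] at h
  simp only [integral_const_mul, sin_two_pi, sin_zero, mul_zero, zero_mul, sub_zero] at h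
  rw [eq_div_iff (mul_ne_zero (by positivity) (one_sub_sq_pos he).ne')]
  unfold invPowIntegral
  linarith

lemma hasDerivAt_add_two_mul_arctan {β : ℝ} (hβ : |β| < 1) (u : ℝ) :
    HasDerivAt (fun x => x + 2 * arctan (β * sin x / (1 - β * cos x)))
      ((1 - β ^ 2) / (1 + β ^ 2 - 2 * β * cos u)) u := by
  have hpos := one_sub_mul_cos_pos hβ u
  refine ((hasDerivAt_id u).add ((((hasDerivAt_sin u).const_mul β).div
    (hasDerivAt_one_sub_mul_cos β u) hpos.ne').arctan.const_mul 2)).congr_deriv ?_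
  have hq : 1 + β ^ 2 - 2 * β * cos u = (1 - β * cos u) ^ 2 + β ^ 2 * sin u ^ 2 := by
    linear_combination -β ^ 2 * sin_sq_add_cos_sq u
  have hq0 : 0 < 1 + β ^ 2 - 2 * β * cos u := by rw [hq]; positivity
  simp only [Pi.div_apply, div_pow]
  rw [hq]
  field_simp
  linear_combination (-β ^ 2) * sin_sq_add_cos_sq u

lemma abs_div_one_add_sqrt_one_sub_sq_lt_one (he : |e| < 1) :
    |e / (1 + √(1 - e ^ 2))| < 1 := by
  rw [abs_div, abs_of_pos (by positivity : 0 < 1 + √(1 - e ^ 2)), div_lt_one (by positivity)]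
  linarith [sqrt_nonneg (1 - e ^ 2)]

lemma hasDerivAt_trueAnomaly (he : |e| < 1) (u : ℝ) :
    HasDerivAt (trueAnomaly e) (√(1 - e ^ 2) * (1 - e * cos u)⁻¹) u := by
  refine (hasDerivAt_add_two_mul_arctan
    (abs_div_one_add_sqrt_one_sub_sq_lt_one he) u).congr_deriv ?_
  have hs : √(1 - e ^ 2) ^ 2 = 1 - e ^ 2 := sq_sqrt (one_sub_sq_pos he).le
  have h1 := one_sub_mul_cos_pos he u
  have h2 : 0 < 1 + √(1 - e ^ 2) := by positivity
  generalize √(1 - e ^ 2) = s at hs h2 ⊢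
  have hden : 1 + (e / (1 + s)) ^ 2 - 2 * (e / (1 + s)) * cos u =
      2 * (1 - e * cos u) / (1 + s) := by
    field_simp
    linear_combination hs
  rw [hden]
  field_simp
  linear_combination -hs

lemma invPowIntegral_one (he : |e| < 1) : invPowIntegral e 1 = 2 * π / √(1 - e ^ 2) := by
  have hint :
      IntervalIntegrable (fun u => (1 - e * cos u)⁻¹) MeasureTheory.volume 0 (2 * π) := by
    simpa using (continuous_inv_pow_one_sub_mul_cos he 1).intervalIntegrable 0 (2 * π)
  have h := integral_eq_sub_of_hasDerivAt (fun u _ => hasDerivAt_trueAnomaly he u)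
    (hint.const_mul _)
  simp only [integral_const_mul, trueAnomaly, sin_two_pi, cos_two_pi, sin_zero, cos_zero,
    mul_zero, mul_one, zero_div, arctan_zero, add_zero, sub_zero] at h
  unfold invPowIntegral
  simp only [pow_one]
  rw [eq_div_iff (sqrt_pos.mpr (one_sub_sq_pos he)).ne', mul_comm]
  exact h

lemma invPowIntegral_seven (he : |e| < 1) :
    invPowIntegral e 7 = 2 * π / √(1 - e ^ 2) *
      ((1 + 15 / 2 * e ^ 2 + 45 / 8 * e ^ 4 + 5 / 16 * e ^ 6) / (1 - e ^ 2) ^ 6) := by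
  have ha := (one_sub_sq_pos he).ne'
  simp only [invPowIntegral_add_two he, invPowIntegral_one he]
  push_cast
  field_simp
  ring

end

/-- The orbital average of `(1 - e cos u)⁻⁷` in the dissipative spin-orbit
problem: for `0 ≤ e < 1`,
`(1/2π) ∫₀^{2π} (1 - e cos u)⁻⁷ du
  = (1 + (15/2)e² + (45/8)e⁴ + (5/16)e⁶)/(1-e²)^{13/2}`. -/
theorem average_Nbar (e : ℝ) (h0 : 0 ≤ e) (h1 : e < 1) :
    (1 / (2 * π)) * ∫ u in (0:ℝ)..(2 * π), ((1 - e * Real.cos u) ^ 7)⁻¹ =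
      (1 + (15 / 2) * e ^ 2 + (45 / 8) * e ^ 4 + (5 / 16) * e ^ 6) /
        (1 - e ^ 2) ^ ((13 : ℝ) / 2) := by
  have he : |e| < 1 := abs_lt.mpr ⟨by linarith, h1⟩
  have h13 : (1 - e ^ 2) ^ ((13 : ℝ) / 2) = (1 - e ^ 2) ^ 6 * √(1 - e ^ 2) := by
    rw [show (13 : ℝ) / 2 = (6 : ℕ) + 1 / 2 by norm_num, rpow_add (one_sub_sq_pos he),
      rpow_natCast, sqrt_eq_rpow]
  rw [← invPowIntegral, invPowIntegral_seven he, h13]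
  field_simp
end

section
/- Automatic reducibility for exact invariant tori: let λ ∈ ℝ, let f: ℝ² → ℝ² be C¹ and conformally symplectic with constant factor λ, i.e. Df(z)ᵀ J Df(z) = λ J for all z, let ω ∈ ℝ, and let K: ℝ → ℝ² be C¹ with DK(θ) ≠ 0 for all θ, satisfying the exact invariance equation f(K(θ)) = K(θ+ω) for all θ. Define N(θ) = (DK(θ)ᵀDK(θ))^{−1}, V(θ) = J^{−1} DK(θ) N(θ), M(θ) = [DK(θ) | V(θ)], and S(θ) = (DK(θ+ω) N(θ+ω))ᵀ · Df(K(θ)) · J^{−1} DK(θ) N(θ). Then for every θ: Df(K(θ)) · M(θ) = M(θ+ω) · [[1, S(θ)],[0, λ]]; equivalently, Df(K(θ)) DK(θ) = DK(θ+ω) and Df(K(θ)) V(θ) = DK(θ+ω) S(θ) + λ V(θ+ω). -/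
/-! For `w ≠ 0` the vectors `w` and `J⁻¹ w` form an orthogonal basis of `ℝ²`, and the
coefficient of a vector `x` along `V(w) = |w|⁻² J⁻¹ w` is the symplectic pairing `Ω(w, x)`.
Differentiating the invariance equation gives `Df(K θ) DK(θ) = DK(θ+ω)`. Expanding
`x = Df(K θ) V(θ)` in the frame at `w = DK(θ+ω)`, the coefficient along `w` is `S(θ)` by
definition, and conformal symplecticity gives `Ω(w, x) = λ Ω(DK(θ), V(θ)) = λ`. -/
open Matrix

noncomputable section

/-- The standard symplectic matrix `J = [[0,1],[-1,0]]` on `ℝ²`. -/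
def J2 : Matrix (Fin 2) (Fin 2) ℝ := !![0, 1; -1, 0]

/-- The Jacobian matrix of a map `f : ℝ² → ℝ²` at a point `z`. -/
def jac (f : (Fin 2 → ℝ) → Fin 2 → ℝ) (z : Fin 2 → ℝ) : Matrix (Fin 2) (Fin 2) ℝ :=
  Matrix.of fun i j => fderiv ℝ f z (Pi.single j 1) i

lemma J2_inv : J2⁻¹ = !![0, -1; 1, 0] :=
  Matrix.inv_eq_right_inv (by simp [J2, Matrix.one_fin_two])

lemma J2_mul_inv : J2 * J2⁻¹ = 1 :=
  Matrix.mul_nonsing_inv _ (by simp [J2, det_fin_two])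

lemma jac_mulVec (f : (Fin 2 → ℝ) → Fin 2 → ℝ) (z v : Fin 2 → ℝ) :
    jac f z *ᵥ v = fderiv ℝ f z v := by
  have hjac : jac f z = LinearMap.toMatrix' (fderiv ℝ f z : (Fin 2 → ℝ) →ₗ[ℝ] Fin 2 → ℝ) := by
    ext i j; simp [jac, LinearMap.toMatrix'_apply]
  rw [hjac, LinearMap.toMatrix'_mulVec]
  rfl

lemma jac_mulVec_deriv_of_semiconj {f : (Fin 2 → ℝ) → Fin 2 → ℝ} {K : ℝ → Fin 2 → ℝ} {ω θ : ℝ}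
    (hf : DifferentiableAt ℝ f (K θ)) (hK : DifferentiableAt ℝ K θ)
    (hinv : ∀ t, f (K t) = K (t + ω)) :
    jac f (K θ) *ᵥ deriv K θ = deriv K (θ + ω) := by
  have hcomp : f ∘ K = fun t => K (t + ω) := funext hinv
  rw [jac_mulVec, ← fderiv_comp_deriv θ hf hK, hcomp, deriv_comp_add_const]

def symplecticForm (a b : Fin 2 → ℝ) : ℝ := a ⬝ᵥ (J2 *ᵥ b)

def normalVec (u : Fin 2 → ℝ) : Fin 2 → ℝ := (u ⬝ᵥ u)⁻¹ • (J2⁻¹ *ᵥ u)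

lemma symplecticForm_mulVec_mulVec {A : Matrix (Fin 2) (Fin 2) ℝ} {lam : ℝ}
    (hA : Aᵀ * J2 * A = lam • J2) (a b : Fin 2 → ℝ) :
    symplecticForm (A *ᵥ a) (A *ᵥ b) = lam * symplecticForm a b := by
  rw [symplecticForm, symplecticForm, dotProduct_mulVec, ← vecMul_transpose, vecMul_vecMul, ← dotProduct_mulVec, mulVec_mulVec,
    hA, smul_mulVec, dotProduct_smul, smul_eq_mul]

lemma symplecticForm_normalVec_self {u : Fin 2 → ℝ} (hu : u ≠ 0) :
    symplecticForm u (normalVec u) = 1 := by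
  rw [symplecticForm, normalVec, mulVec_smul, mulVec_mulVec, J2_mul_inv, one_mulVec,
    dotProduct_smul, smul_eq_mul, inv_mul_cancel₀ (dotProduct_self_eq_zero.not.mpr hu)]

lemma dotProduct_self_smul_eq (w x : Fin 2 → ℝ) :
    (w ⬝ᵥ w) • x = (w ⬝ᵥ x) • w + symplecticForm w x • (J2⁻¹ *ᵥ w) := by
  rw [symplecticForm, J2_inv]
  ext i
  fin_cases i <;>
  · simp [J2, dotProduct, Fin.sum_univ_two, mulVec]
    ring

lemma eq_smul_add_symplecticForm_smul_normalVec {w : Fin 2 → ℝ} (hw : w ≠ 0) (x : Fin 2 → ℝ) :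
    x = (((w ⬝ᵥ w)⁻¹ • w) ⬝ᵥ x) • w + symplecticForm w x • normalVec w := by
  rw [normalVec, smul_dotProduct, smul_eq_mul, mul_smul, smul_comm (symplecticForm w x),
    ← smul_add, ← dotProduct_self_smul_eq, inv_smul_smul₀ (dotProduct_self_eq_zero.not.mpr hw)]

lemma mulVec_normalVec {A : Matrix (Fin 2) (Fin 2) ℝ} {lam : ℝ}
    (hA : Aᵀ * J2 * A = lam • J2) {u : Fin 2 → ℝ} (hu : u ≠ 0) (hAu : A *ᵥ u ≠ 0) :
    A *ᵥ normalVec u =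
      ((((A *ᵥ u) ⬝ᵥ (A *ᵥ u))⁻¹ • (A *ᵥ u)) ⬝ᵥ (A *ᵥ normalVec u)) • (A *ᵥ u)
        + lam • normalVec (A *ᵥ u) := by
  conv_lhs => rw [eq_smul_add_symplecticForm_smul_normalVec hAu (A *ᵥ normalVec u)]
  rw [symplecticForm_mulVec_mulVec hA, symplecticForm_normalVec_self hu, mul_one]

/-- Automatic reducibility for exact invariant tori of a conformally symplectic
map `f` with constant factor `λ`: if `f(K(θ)) = K(θ+ω)` for all `θ`, then with
`N(θ) = (DK(θ)ᵀDK(θ))⁻¹`, `V(θ) = J⁻¹ DK(θ) N(θ)` and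
`S(θ) = (DK(θ+ω)N(θ+ω))ᵀ Df(K(θ)) J⁻¹ DK(θ)N(θ)`, the derivative of `f` maps
the frame `M = [DK | V]` to its shift times the triangular matrix
`[[1, S(θ)],[0, λ]]`; componentwise: `Df(K(θ)) DK(θ) = DK(θ+ω)` and
`Df(K(θ)) V(θ) = S(θ) DK(θ+ω) + λ V(θ+ω)`. -/
theorem automatic_reducibility (lam ω : ℝ)
    (f : (Fin 2 → ℝ) → Fin 2 → ℝ) (hf : ContDiff ℝ 1 f)
    (hconf : ∀ z, (jac f z)ᵀ * J2 * jac f z = lam • J2)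
    (K : ℝ → Fin 2 → ℝ) (hK : ContDiff ℝ 1 K) (hDK : ∀ θ, deriv K θ ≠ 0)
    (hinv : ∀ θ, f (K θ) = K (θ + ω))
    (N : ℝ → ℝ) (hN : ∀ θ, N θ = (deriv K θ ⬝ᵥ deriv K θ)⁻¹)
    (V : ℝ → Fin 2 → ℝ) (hV : ∀ θ, V θ = N θ • (J2⁻¹).mulVec (deriv K θ))
    (S : ℝ → ℝ)
    (hS : ∀ θ, S θ = (N (θ + ω) • deriv K (θ + ω)) ⬝ᵥ
      ((jac f (K θ)).mulVec ((J2⁻¹).mulVec (N θ • deriv K θ)))) :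
    ∀ θ : ℝ,
      (jac f (K θ)).mulVec (deriv K θ) = deriv K (θ + ω) ∧
      (jac f (K θ)).mulVec (V θ) = S θ • deriv K (θ + ω) + lam • V (θ + ω) := by
  intro θ
  have hchain : jac f (K θ) *ᵥ deriv K θ = deriv K (θ + ω) :=
    jac_mulVec_deriv_of_semiconj (hf.differentiable one_ne_zero _)
      (hK.differentiable one_ne_zero _) hinv
  have hV_normal : ∀ t, V t = normalVec (deriv K t) := fun t => by rw [hV, hN, normalVec]
  have hS_coeff : S θ = ((deriv K (θ + ω) ⬝ᵥ deriv K (θ + ω))⁻¹ • deriv K (θ + ω)) ⬝ᵥ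
      (jac f (K θ) *ᵥ normalVec (deriv K θ)) := by
    rw [hS, hN, hN, normalVec, mulVec_smul]
  refine ⟨hchain, ?_⟩
  rw [hV_normal, hV_normal, hS_coeff]
  simpa only [hchain] using mulVec_normalVec (hconf (K θ)) (hDK θ) (hchain ▸ hDK (θ + ω))
end
end
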